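/- If η ∈ F_{q^n} satisfies N(η) ≠ (-1)^{nk} where N is the norm from F_{q^n} to F_q, then for every f in the twisted Gabidulin set G(η,r) with f ≠ 0, the kernel of f on F_{q^n} has F_q-dimension at most k-1. -/

import Mathlib

/-!
The kernel `W` of `f` is the set of roots of the `q`-linearized polynomial `f`, so
`q ^ dim W ≤ deg f ≤ q ^ k`, with `deg f ≤ q ^ (k - 1)` when the top coefficient
`b = η f₀ ^ q ^ r` vanishes. If `dim W = k`, then `f = b ∏_{v ∈ W} (X - v)`, and comparing the
coefficients of `X` gives `f₀ = b ∏_{v ∈ W, v ≠ 0} (-v)`. The nonzero vectors of `W` fall into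
`(q ^ k - 1) / (q - 1)` orbits `{u w : u ∈ F_qˣ}`, and the norms `N(-u w)` over one orbit multiply
to `(∏ (-u)) ^ n N(w) ^ (q - 1) = (-1) ^ n`; hence `N(f₀) = N(η) N(f₀) ^ q ^ r (-1) ^ (n k)`. As
`N(f₀) ≠ 0` lies in `F_q`, this forces `N(η) = (-1) ^ (n k)`.
-/

open Polynomial Finset Module

section Orbits

variable {G α M : Type*} [Group G] [Fintype G] [MulAction G α] [DecidableEq α] [CommMonoid M]

theorem Finset.exists_card_eq_mul_prod_eq_pow_of_prod_orbit {T : Finset α}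
    (hT : ∀ x ∈ T, ∀ g : G, g • x ∈ T) (hfree : ∀ x ∈ T, ∀ g : G, g • x = x → g = 1)
    {f : α → M} {c : M} (hf : ∀ x ∈ T, ∏ g : G, f (g • x) = c) :
    ∃ m, #T = m * Fintype.card G ∧ ∏ x ∈ T, f x = c ^ m := by
  induction T using Finset.strongInduction with
  | H T ih =>
  obtain rfl | ⟨x, hx⟩ := T.eq_empty_or_nonempty
  · exact ⟨0, by simp, by simp⟩
  have hinj : Function.Injective (· • x : G → α) := fun g h hgh => by
    have := hfree x hx (h⁻¹ * g) (by simp only at hgh; rw [mul_smul, hgh, inv_smul_smul])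
    rwa [inv_mul_eq_one, eq_comm] at this
  set O := univ.image (· • x : G → α)
  have hOT : O ⊆ T := image_subset_iff.2 fun g _ => hT x hx g
  have hxO : x ∈ O := mem_image.2 ⟨1, mem_univ _, one_smul G x⟩
  have hrest : ∀ y ∈ T \ O, ∀ g : G, g • y ∈ T \ O := by
    intro y hy g
    simp only [mem_sdiff, O, mem_image, mem_univ, true_and, not_exists] at hy ⊢
    refine ⟨hT y hy.1 g, fun h hh => hy.2 (g⁻¹ * h) ?_⟩
    rw [mul_smul, hh, inv_smul_smul]
  obtain ⟨m, hcard, hprod⟩ := ih (T \ O) (sdiff_ssubset hOT ⟨x, hxO⟩) hrest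
    (fun y hy => hfree y (mem_sdiff.1 hy).1) (fun y hy => hf y (mem_sdiff.1 hy).1)
  have hOcard : #O = Fintype.card G := by rw [card_image_of_injective _ hinj, card_univ]
  refine ⟨m + 1, ?_, ?_⟩
  · rw [← card_sdiff_add_card_eq_card hOT, hcard, hOcard, add_one_mul]
  · rw [← prod_sdiff hOT, hprod, prod_image fun g _ h _ hgh => hinj hgh, hf x hx, pow_succ]

end Orbits

section LinearizedPoly

variable {R : Type*} [Semiring R] (q : ℕ) {m : ℕ}

noncomputable def linearizedPoly (a : Fin m → R) : R[X] :=
  ∑ i, C (a i) * X ^ q ^ (i : ℕ)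

theorem eval_linearizedPoly (a : Fin m → R) (x : R) :
    (linearizedPoly q a).eval x = ∑ i, a i * x ^ q ^ (i : ℕ) := by
  simp [linearizedPoly, eval_finsetSum]

theorem linearizedPoly_snoc (a : Fin m → R) (b : R) :
    linearizedPoly q (Fin.snoc a b : Fin (m + 1) → R) = linearizedPoly q a + C b * X ^ q ^ m := by
  simp [linearizedPoly, Fin.sum_univ_castSucc]

variable {q}

theorem natDegree_linearizedPoly_le (hq : 0 < q) (a : Fin m → R) :
    (linearizedPoly q a).natDegree ≤ q ^ (m - 1) :=
  natDegree_sum_le_of_forall_le _ _ fun i _ =>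
    (natDegree_C_mul_X_pow_le _ _).trans (Nat.pow_le_pow_right hq (by omega))

theorem coeff_linearizedPoly_pow (hq : 1 < q) (a : Fin m → R) (j : Fin m) :
    (linearizedPoly q a).coeff (q ^ (j : ℕ)) = a j := by
  simp [linearizedPoly, (Nat.pow_right_injective hq).eq_iff, Fin.val_inj]

theorem linearizedPoly_ne_zero (hq : 1 < q) {a : Fin m → R} (ha : a ≠ 0) :
    linearizedPoly q a ≠ 0 := by
  obtain ⟨j, hj⟩ := Function.ne_iff.1 ha
  exact fun h => hj (by rw [← coeff_linearizedPoly_pow hq a j, h, coeff_zero, Pi.zero_apply])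

theorem coeff_linearizedPoly_pow_last (hq : 1 < q) (a : Fin (m + 1) → R) :
    (linearizedPoly q a).coeff (q ^ m) = a (Fin.last m) := by
  simpa using coeff_linearizedPoly_pow hq a (Fin.last m)

theorem natDegree_linearizedPoly (hq : 1 < q) {a : Fin (m + 1) → R} (ha : a (Fin.last m) ≠ 0) :
    (linearizedPoly q a).natDegree = q ^ m :=
  (natDegree_linearizedPoly_le hq.le a).antisymm
    (le_natDegree_of_ne_zero (by rwa [Nat.add_sub_cancel, coeff_linearizedPoly_pow_last hq]))

theorem leadingCoeff_linearizedPoly (hq : 1 < q) {a : Fin (m + 1) → R}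
    (ha : a (Fin.last m) ≠ 0) : (linearizedPoly q a).leadingCoeff = a (Fin.last m) := by
  rw [leadingCoeff, natDegree_linearizedPoly hq ha, coeff_linearizedPoly_pow_last hq]

end LinearizedPoly

section Roots

variable {K : Type*} [Field K]

theorem eq_C_leadingCoeff_mul_prod_X_sub_C {P : K[X]} (hP : P ≠ 0) {T : Finset K}
    (hT : ∀ a ∈ T, P.IsRoot a) (hcard : P.natDegree ≤ #T) :
    P = C P.leadingCoeff * ∏ a ∈ T, (X - C a) := by
  have hle : T.val ≤ P.roots :=
    (Multiset.le_iff_subset T.nodup).2 fun a ha => (mem_roots hP).2 (hT a ha)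
  have hroots : T.val = P.roots :=
    Multiset.eq_of_le_of_card_le hle ((card_roots' P).trans hcard)
  conv_lhs => rw [← C_leadingCoeff_mul_prod_multiset_X_sub_C
    (((card_roots' P).antisymm (hcard.trans (Multiset.card_le_card hle))))]
  rw [← hroots]
  rfl

theorem coeff_one_prod_X_sub_C_of_zero_mem [DecidableEq K] {T : Finset K} (h0 : 0 ∈ T) :
    (∏ a ∈ T, (X - C a)).coeff 1 = ∏ a ∈ T.erase 0, -a := by
  rw [← mul_prod_erase T _ h0, C_0, sub_zero, ← zero_add 1, coeff_X_mul, coeff_zero_eq_eval_zero,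
    eval_prod]
  simp

end Roots

section FiniteField

variable (F : Type*) {L : Type*} [Field F] [Fintype F] [Field L] [Algebra F L] {m : ℕ}

noncomputable def linearizedMap (a : Fin m → L) : L →ₗ[F] L :=
  ∑ i, a i • ((FiniteField.frobeniusAlgHom F L) ^ (i : ℕ)).toLinearMap

variable {F}

theorem linearizedMap_apply (a : Fin m → L) (x : L) :
    linearizedMap F a x = (linearizedPoly (Fintype.card F) a).eval x := by
  simp [linearizedMap, eval_linearizedPoly, AlgHom.coe_pow, FiniteField.coe_frobeniusAlgHom,
    pow_iterate]

theorem FiniteField.pow_geomSum_eq_pow (x : F) (d : ℕ) :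
    x ^ ((Fintype.card F ^ d - 1) / (Fintype.card F - 1)) = x ^ d := by
  rw [← Nat.geomSum_eq Fintype.one_lt_card, ← prod_pow_eq_pow_sum, prod_congr rfl fun i _ =>
    FiniteField.pow_card_pow i x, prod_const, card_range]

theorem isRoot_linearizedPoly_of_mem_ker {a : Fin m → L} {v : L}
    (hv : v ∈ LinearMap.ker (linearizedMap F a)) :
    (linearizedPoly (Fintype.card F) a).IsRoot v := by
  rwa [IsRoot, ← linearizedMap_apply]

variable [Fintype L]

theorem card_filter_mem_eq_pow_finrank (W : Submodule F L) [DecidablePred (· ∈ W)] :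
    #({v | v ∈ W} : Finset L) = Fintype.card F ^ finrank F W := by
  rw [← Fintype.card_subtype, ← Module.card_eq_pow_finrank]

theorem prod_units_norm_neg_smul [DecidableEq F] {w : L} (hw : w ≠ 0) :
    ∏ u : Fˣ, Algebra.norm F (-(u • w)) = (-1) ^ finrank F L := by
  have hunits : ∏ u : Fˣ, (u : F) = -1 := by
    rw [← Units.coe_prod, FiniteField.prod_univ_units_id_eq_neg_one, Units.val_neg, Units.val_one]
  calc ∏ u : Fˣ, Algebra.norm F (-(u • w))
      = ∏ u : Fˣ, Algebra.norm F (u • w) :=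
        Fintype.prod_equiv (Equiv.neg Fˣ) _ _ fun u => by simp [Units.neg_smul]
    _ = ∏ u : Fˣ, (u : F) ^ finrank F L * Algebra.norm F w := by
        simp [Units.smul_def, Algebra.smul_def, Algebra.norm_algebraMap]
    _ = (-1) ^ finrank F L := by
        rw [prod_mul_distrib, prod_pow, hunits, prod_const, card_univ, Fintype.card_units,
          FiniteField.pow_card_sub_one_eq_one _ (Algebra.norm_ne_zero_iff.2 hw), mul_one]

theorem norm_prod_neg_nonzero_mem [DecidableEq L] (W : Submodule F L) [DecidablePred (· ∈ W)] :
    Algebra.norm F (∏ v ∈ ({v | v ∈ W} : Finset L).erase 0, -v) =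
      (-1) ^ (finrank F L * finrank F W) := by
  classical
  set T := ({v | v ∈ W} : Finset L).erase 0
  have hT : ∀ v ∈ T, v ≠ 0 ∧ v ∈ W := by simp [T]
  obtain ⟨m, hcard, hprod⟩ := Finset.exists_card_eq_mul_prod_eq_pow_of_prod_orbit
    (G := Fˣ) (T := T) (f := fun v => Algebra.norm F (-v)) (c := (-1) ^ finrank F L)
    (fun v hv u => by simp [T, (hT v hv).1, W.smul_mem (u : F) (hT v hv).2, Units.smul_def])
    (fun v hv u hu =>
      Units.ext (smul_left_injective F (hT v hv).1 (by simpa [Units.smul_def] using hu)))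
    (fun v hv => prod_units_norm_neg_smul (hT v hv).1)
  have hm : m = (Fintype.card F ^ finrank F W - 1) / (Fintype.card F - 1) := by
    rw [← card_filter_mem_eq_pow_finrank W,
      ← card_erase_of_mem (show (0 : L) ∈ ({v | v ∈ W} : Finset L) by simp), hcard,
      Fintype.card_units, Nat.mul_div_cancel _ (by have := Fintype.one_lt_card (α := F); omega)]
  rw [map_prod, hprod, hm, FiniteField.pow_geomSum_eq_pow, pow_mul]

theorem pow_finrank_ker_le_natDegree {a : Fin m → L} (ha : a ≠ 0) :
    Fintype.card F ^ finrank F (LinearMap.ker (linearizedMap F a)) ≤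
      (linearizedPoly (Fintype.card F) a).natDegree := by
  classical
  rw [← card_filter_mem_eq_pow_finrank]
  refine card_le_degree_of_subset_roots fun v hv => ?_
  rw [mem_roots (linearizedPoly_ne_zero Fintype.one_lt_card ha)]
  exact isRoot_linearizedPoly_of_mem_ker (by simpa using hv)

theorem norm_apply_zero_eq_of_finrank_ker_eq {a : Fin (m + 1) → L} (ha : a (Fin.last m) ≠ 0)
    (hdim : finrank F (LinearMap.ker (linearizedMap F a)) = m) :
    Algebra.norm F (a 0) = Algebra.norm F (a (Fin.last m)) * (-1) ^ (finrank F L * m) := by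
  classical
  have hq : 1 < Fintype.card F := Fintype.one_lt_card
  set P := linearizedPoly (Fintype.card F) a
  set T : Finset L := {v | v ∈ LinearMap.ker (linearizedMap F a)}
  have hP : P = C (a (Fin.last m)) * ∏ v ∈ T, (X - C v) := by
    rw [← leadingCoeff_linearizedPoly hq ha]
    refine eq_C_leadingCoeff_mul_prod_X_sub_C (linearizedPoly_ne_zero hq fun h => ha (by simp [h]))
      (fun v hv => isRoot_linearizedPoly_of_mem_ker (by simpa [T] using hv)) ?_
    rw [natDegree_linearizedPoly hq ha, card_filter_mem_eq_pow_finrank, hdim]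
  have hcoeff : a 0 = a (Fin.last m) * ∏ v ∈ T.erase 0, -v := by
    have := congrArg (coeff · 1) hP
    simp only [coeff_C_mul,
      coeff_one_prod_X_sub_C_of_zero_mem (show (0 : L) ∈ T by simp [T])] at this
    rwa [← coeff_linearizedPoly_pow hq a 0, Fin.val_zero, pow_zero]
  rw [hcoeff, map_mul, norm_prod_neg_nonzero_mem, hdim]

theorem finrank_ker_linearizedMap_snoc_le {k : ℕ} (hk : 0 < k) (r : ℕ) {η : L}
    (hη : Algebra.norm F η ≠ (-1) ^ (finrank F L * k)) {c : Fin k → L} (hc : c ≠ 0) :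
    finrank F (LinearMap.ker (linearizedMap F
      (Fin.snoc c (η * c ⟨0, hk⟩ ^ Fintype.card F ^ r) : Fin (k + 1) → L))) ≤ k - 1 := by
  set q := Fintype.card F
  set b := η * c ⟨0, hk⟩ ^ q ^ r
  set a : Fin (k + 1) → L := Fin.snoc c b
  have hq : 1 < q := Fintype.one_lt_card
  have hbound :
      q ^ finrank F (LinearMap.ker (linearizedMap F a)) ≤ (linearizedPoly q a).natDegree :=
    pow_finrank_ker_le_natDegree fun h =>
      hc (funext fun i => by simpa [a] using congrFun h i.castSucc)
  by_cases hb : b = 0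
  · rw [linearizedPoly_snoc, hb, C_0, zero_mul, add_zero] at hbound
    exact (Nat.pow_le_pow_iff_right hq).1 (hbound.trans (natDegree_linearizedPoly_le hq.le c))
  by_contra! hdim
  have hlast : a (Fin.last k) ≠ 0 := by simpa [a] using hb
  have hdimk : finrank F (LinearMap.ker (linearizedMap F a)) = k :=
    ((Nat.pow_le_pow_iff_right hq).1 (hbound.trans (natDegree_linearizedPoly hq hlast).le)).antisymm
      (by omega)
  have hc0 : Algebra.norm F (c ⟨0, hk⟩) ≠ 0 :=
    Algebra.norm_ne_zero_iff.2 fun h => hb (by simp [b, h, zero_pow (pow_pos hq.le r).ne'])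
  have key := norm_apply_zero_eq_of_finrank_ker_eq hlast hdimk
  rw [show a 0 = c ⟨0, hk⟩ from Fin.snoc_castSucc (i := ⟨0, hk⟩) ..,
    show a (Fin.last k) = b from Fin.snoc_last .., map_mul, map_pow,
    FiniteField.pow_card_pow] at key
  have hsq : ((-1 : F) ^ (finrank F L * k)) ^ 2 = 1 := by
    rw [← pow_mul, mul_comm, pow_mul, neg_one_sq, one_pow]
  have hinv : Algebra.norm F η * (-1) ^ (finrank F L * k) = 1 :=
    mul_left_cancel₀ hc0 (by linear_combination -key)
  exact hη (by linear_combination (-1 : F) ^ (finrank F L * k) * hinv - Algebra.norm F η * hsq)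

end FiniteField

theorem stmt_8_general (q n : ℕ)
    (F L : Type) [Field F] [Fintype F] [Field L] [Fintype L] [Algebra F L]
    (hF : Fintype.card F = q) (hL : Fintype.card L = q ^ n)
    (k r : ℕ) (hk : 0 < k) (η : L)
    (hη : η ^ ((q ^ n - 1) / (q - 1)) ≠ (-1) ^ (n * k))
    (c : Fin k → L) (hc : c ≠ 0) :
    ∃ V : Submodule F L,
      (V : Set L) = {a : L |
        (∑ i : Fin k, c i * a ^ q ^ (i : ℕ)) + η * (c ⟨0, hk⟩) ^ q ^ r * a ^ q ^ k = 0} ∧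
      Module.finrank F V ≤ k - 1 := by
  subst hF
  have hn : finrank F L = n :=
    Nat.pow_right_injective (Fintype.one_lt_card (α := F)) <| by
      simp only [← Module.card_eq_pow_finrank (K := F) (V := L), hL]
  have hnorm : Algebra.norm F η ≠ (-1) ^ (finrank F L * k) := fun h => hη <| by
    rw [← hL, ← Nat.card_eq_fintype_card, ← Nat.card_eq_fintype_card,
      ← FiniteField.algebraMap_norm_eq_pow, h, hn, map_pow, map_neg, map_one]
  refine ⟨LinearMap.ker (linearizedMap F
    (Fin.snoc c (η * c ⟨0, hk⟩ ^ Fintype.card F ^ r) : Fin (k + 1) → L)), ?_,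
    finrank_ker_linearizedMap_snoc_le hk r hnorm hc⟩
  ext x
  simp [linearizedMap_apply, eval_linearizedPoly, Fin.sum_univ_castSucc]

/-- If η ∈ F_{q^n} satisfies N(η) ≠ (-1)^{nk}, then for every
nonzero f in the twisted Gabidulin set G(η,r), the kernel of f on F_{q^n} has
F_q-dimension at most k-1. -/
theorem stmt_8 (q n : ℕ) (hq : IsPrimePow q) (hn : 0 < n)
    (F L : Type) [Field F] [Fintype F] [Field L] [Fintype L] [Algebra F L]
    (hF : Fintype.card F = q) (hL : Fintype.card L = q ^ n)
    (k r : ℕ) (hk : 0 < k) (hkn : k < n) (η : L)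
    (hη : η ^ ((q ^ n - 1) / (q - 1)) ≠ (-1) ^ (n * k))
    (c : Fin k → L) (hc : c ≠ 0) :
    ∃ V : Submodule F L,
      (V : Set L) = {a : L |
        (∑ i : Fin k, c i * a ^ q ^ (i : ℕ)) + η * (c ⟨0, hk⟩) ^ q ^ r * a ^ q ^ k = 0} ∧
      Module.finrank F V ≤ k - 1 :=
  stmt_8_general q n F L hF hL k r hk η hη c hc
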